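/- ∑_{n=1}^∞ h_{n-1}^{(2)}/(n-1/2)³ = 9·ζ(2)·ζ(3) - (31/2)·ζ(5), where h_n^{(2)} = ∑_{k=1}^n 1/(k-1/2)² and h_0^{(2)} = 0. -/

import Mathlib

/-!
Write `oddZeta p = ∑_{m ≥ 0} (m + 1/2)^(-p) = (2^p - 1) ζ(p)`,
`oddEulerSum p q = ∑_{n ≥ 0} h_n^{(p)} (n + 1/2)^(-q)` and
`mixedEulerSum p q = ∑_{n ≥ 1} h_n^{(p)} n^(-q)`.
Three rearrangements of the double series `∑_{m, m'} (m + 1/2)^(-2) (m' + 1/2)^(-3)` give linear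
relations between them. Splitting it at the diagonal gives
`oddZeta 2 * oddZeta 3 = oddEulerSum 2 3 + oddZeta 5 + oddEulerSum 3 2`. Summing it along the
antidiagonals, where `(m + 1/2) + (m' + 1/2) = n` and partial fractions leave finite sums, expresses
`oddZeta 2 * oddZeta 3` through the `mixedEulerSum`s. Summing each off-diagonal half over the gap
`n = |m' - m|`, with partial fractions in the smaller index, expresses `oddEulerSum 2 3` and
`oddEulerSum 3 2` through the products `oddZeta p * ζ(q)` and the same `mixedEulerSum`s.
Eliminating the unknowns leaves `oddEulerSum 2 3 = 3 oddZeta 2 ζ(3) - oddZeta 5 / 2`.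
-/

open scoped BigOperators

/-- ζ(p) = ∑_{n=1}^∞ 1/n^p -/
noncomputable def zetaR (p : ℕ) : ℝ := ∑' n : ℕ, 1 / ((n : ℝ) + 1) ^ p

/-- Odd harmonic number h_n^{(p)} = ∑_{k=1}^n 1/(k−1/2)^p -/
noncomputable def oddH (p n : ℕ) : ℝ := ∑ k ∈ Finset.range n, 1 / ((k : ℝ) + 1 / 2) ^ p

/-- Alternating odd harmonic number h̄_n^{(p)} = ∑_{k=1}^n (−1)^{k−1}/(k−1/2)^p -/
noncomputable def altOddH (p n : ℕ) : ℝ :=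
  ∑ k ∈ Finset.range n, (-1 : ℝ) ^ k / ((k : ℝ) + 1 / 2) ^ p

/-- Dirichlet beta β(s) = ∑_{n=0}^∞ (−1)^n/(2n+1)^s -/
noncomputable def betaD (s : ℕ) : ℝ := ∑' n : ℕ, (-1 : ℝ) ^ n / (2 * (n : ℝ) + 1) ^ s

open Filter Finset Topology

theorem summable_mul_of_abs_le {ι : Type*} {b g : ι → ℝ} {C : ℝ} (hg : Summable g)
    (hb : ∀ i, |b i| ≤ C) : Summable fun i => b i * g i :=
  (hg.abs.mul_left C).of_norm_bounded fun i => by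
    rw [Real.norm_eq_abs, abs_mul]
    exact mul_le_mul_of_nonneg_right (hb i) (abs_nonneg _)

theorem abs_sum_range_le_tsum_abs {f : ℕ → ℝ} (hf : Summable f) (n : ℕ) :
    |∑ m ∈ range n, f m| ≤ ∑' m, |f m| :=
  (abs_sum_le_sum_abs _ _).trans (hf.abs.sum_le_tsum _ fun _ _ => abs_nonneg _)

theorem tsum_mul_tsum_eq_tsum_sum_range_mul_add {f g : ℕ → ℝ} (hf : Summable f)
    (hg : Summable g) :
    (∑' n, f n) * (∑' n, g n) =
      ∑' n, (∑ m ∈ range n, f m) * g n + ∑' n, f n * g n + ∑' n, f n * ∑ m ∈ range n, g m := by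
  have hF : Summable fun n => (∑ m ∈ range n, f m) * g n :=
    summable_mul_of_abs_le hg (abs_sum_range_le_tsum_abs hf)
  have hfg : Summable fun n => f n * g n :=
    summable_mul_of_abs_le hg fun n => hf.abs.le_tsum n fun _ _ => abs_nonneg _
  have hG : Summable fun n => f n * ∑ m ∈ range n, g m :=
    (summable_mul_of_abs_le hf (abs_sum_range_le_tsum_abs hg)).congr fun n => mul_comm _ _
  have hpartial : ∀ N, ∑ n ∈ range N, ((∑ m ∈ range n, f m) * g n + f n * g n
      + f n * ∑ m ∈ range n, g m) = (∑ m ∈ range N, f m) * ∑ m ∈ range N, g m := by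
    intro N
    induction N with
    | zero => simp
    | succ N ih => rw [sum_range_succ, ih, sum_range_succ, sum_range_succ]; ring
  have hsum := ((hF.add hfg).add hG).hasSum_iff_tendsto_nat.2 <| by
    simpa only [hpartial] using hf.hasSum.tendsto_sum_nat.mul hg.hasSum.tendsto_sum_nat
  rw [← hsum.tsum_eq, (hF.add hfg).tsum_add hG, hF.tsum_add hfg]

theorem tsum_sum_range_eq_tsum_tsum_add_succ {F : ℕ → ℕ → ℝ}
    (hF : Summable (Function.uncurry F)) :
    ∑' n, ∑ m ∈ range n, F m n = ∑' k, ∑' m, F m (m + k + 1) := by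
  set G : ℕ → ℕ → ℝ := fun m n => if m < n then F m n else 0 with hGdef
  have hG : Summable (Function.uncurry G) :=
    hF.abs.of_norm_bounded fun p => by
      simp only [Function.uncurry, hGdef, Real.norm_eq_abs]
      split_ifs <;> simp
  set i : ℕ × ℕ → ℕ × ℕ := fun q => (q.2, q.2 + q.1 + 1)
  have hi : Function.Injective i := by
    rintro ⟨k, m⟩ ⟨k', m'⟩ h
    simp only [i, Prod.mk.injEq] at h
    ext <;> omega
  have hsupp : Function.support (Function.uncurry G) ⊆ Set.range i := by
    rintro ⟨m, n⟩ hmn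
    have hlt : m < n := by
      by_contra h
      exact hmn (if_neg h)
    exact ⟨(n - m - 1, m), by simp only [i]; ext <;> simp; omega⟩
  have hcolumn : ∀ n, ∑' m, G m n = ∑ m ∈ range n, F m n := fun n => by
    rw [tsum_eq_sum (s := range n) fun m hm => if_neg (by simpa using hm)]
    exact sum_congr rfl fun m hm => if_pos (mem_range.1 hm)
  calc ∑' n, ∑ m ∈ range n, F m n = ∑' p, Function.uncurry G p := by
        rw [← tsum_congr hcolumn, hG.tsum_comm, hG.tsum_prod]; rfl
    _ = ∑' q, Function.uncurry G (i q) := (hi.tsum_eq hsupp).symm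
    _ = ∑' k, ∑' m, F m (m + k + 1) :=
        (hG.comp_injective hi).tsum_prod.trans
          (tsum_congr fun k => tsum_congr fun m => if_pos (by simp only [i]; omega))

theorem hasSum_sub_add_of_antitone {f : ℕ → ℝ} (hf : Antitone f)
    (hf0 : Tendsto f atTop (𝓝 0)) (n : ℕ) :
    HasSum (fun m => f m - f (m + n)) (∑ i ∈ range n, f i) := by
  rw [hasSum_iff_tendsto_nat_of_nonneg fun m => sub_nonneg.2 (hf (Nat.le_add_right m n))]
  have hpartial : ∀ M, ∑ m ∈ range M, (f m - f (m + n)) =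
      ∑ i ∈ range n, f i - ∑ i ∈ range n, f (M + i) := by
    intro M
    have h := (sum_range_add f M n).symm.trans (add_comm M n ▸ sum_range_add f n M)
    simp only [sum_sub_distrib, add_comm _ n]
    linarith
  have hlim : Tendsto (fun M => ∑ i ∈ range n, f (M + i)) atTop (𝓝 0) := by
    simpa using tendsto_finsetSum (range n) fun i _ => hf0.comp (tendsto_add_atTop_nat i)
  simpa [hpartial] using tendsto_const_nhds.sub hlim

noncomputable def oddTerm (p m : ℕ) : ℝ := 1 / ((m : ℝ) + 1 / 2) ^ p

noncomputable def oddZeta (p : ℕ) : ℝ := ∑' m, oddTerm p m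

noncomputable def oddEulerSum (p q : ℕ) : ℝ := ∑' n, oddH p n * oddTerm q n

noncomputable def mixedEulerSum (p q : ℕ) : ℝ := ∑' k, oddH p (k + 1) / ((k : ℝ) + 1) ^ q

theorem oddH_eq_sum_oddTerm (p n : ℕ) : oddH p n = ∑ m ∈ range n, oddTerm p m := rfl

theorem oddTerm_nonneg (p m : ℕ) : 0 ≤ oddTerm p m := by unfold oddTerm; positivity

theorem oddTerm_mul_oddTerm (p q m : ℕ) : oddTerm p m * oddTerm q m = oddTerm (p + q) m := by
  rw [oddTerm, oddTerm, oddTerm, div_mul_div_comm, one_mul, ← pow_add]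

theorem antitone_oddTerm_one : Antitone (oddTerm 1) := fun m n hmn => by
  unfold oddTerm
  gcongr

theorem tendsto_oddTerm_one : Tendsto (oddTerm 1) atTop (𝓝 0) :=
  (tendsto_inv_atTop_zero.comp (tendsto_natCast_atTop_atTop.atTop_add
    (tendsto_const_nhds (x := (1 / 2 : ℝ))))).congr fun m => by simp [oddTerm]

theorem summable_oddTerm {p : ℕ} (hp : 2 ≤ p) : Summable (oddTerm p) :=
  ((Real.summable_one_div_nat_add_rpow (1 / 2) p).2 (by exact_mod_cast hp)).congr fun m => by
    rw [abs_of_pos (by positivity), Real.rpow_natCast, oddTerm]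

theorem hasSum_oddTerm {p : ℕ} (hp : 2 ≤ p) : HasSum (oddTerm p) (oddZeta p) :=
  (summable_oddTerm hp).hasSum

theorem hasSum_zetaR {q : ℕ} (hq : 2 ≤ q) :
    HasSum (fun n : ℕ => 1 / ((n : ℝ) + 1) ^ q) (zetaR q) :=
  (((Real.summable_one_div_nat_add_rpow 1 q).2 (by exact_mod_cast hq)).congr fun n => by
    rw [abs_of_pos (by positivity), Real.rpow_natCast]).hasSum

theorem summable_oddTerm_mul_oddTerm {p q : ℕ} (hp : 2 ≤ p) (hq : 2 ≤ q) :
    Summable (Function.uncurry fun m n => oddTerm p m * oddTerm q n) :=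
  (summable_oddTerm hp).mul_of_nonneg (summable_oddTerm hq) (oddTerm_nonneg p) (oddTerm_nonneg q)

theorem hasSum_oddTerm_add {p : ℕ} (hp : 2 ≤ p) (n : ℕ) :
    HasSum (fun m => oddTerm p (m + n)) (oddZeta p - oddH p n) :=
  (hasSum_nat_add_iff' n).2 (hasSum_oddTerm hp)

theorem hasSum_oddTerm_one_sub_oddTerm_one_add (n : ℕ) :
    HasSum (fun m => oddTerm 1 m - oddTerm 1 (m + n)) (oddH 1 n) :=
  hasSum_sub_add_of_antitone antitone_oddTerm_one tendsto_oddTerm_one n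

theorem oddH_nonneg (p n : ℕ) : 0 ≤ oddH p n := sum_nonneg fun m _ => oddTerm_nonneg p m

theorem oddH_le_oddZeta {p : ℕ} (hp : 2 ≤ p) (n : ℕ) : oddH p n ≤ oddZeta p :=
  (summable_oddTerm hp).sum_le_tsum _ fun m _ => oddTerm_nonneg p m

theorem oddH_one_le (n : ℕ) : oddH 1 n ≤ 2 * n := by
  refine (sum_le_sum fun m _ => ?_).trans_eq (by simp [mul_comm] : ∑ _m ∈ range n, (2 : ℝ) = _)
  rw [pow_one, div_le_iff₀ (by positivity)]
  linarith [(m.cast_nonneg : (0 : ℝ) ≤ m)]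

theorem oddZeta_eq {p : ℕ} (hp : 2 ≤ p) : oddZeta p = (2 ^ p - 1) * zetaR p := by
  have hsplit : HasSum (fun n : ℕ => 1 / ((n : ℝ) + 1) ^ p)
      (oddZeta p / 2 ^ p + zetaR p / 2 ^ p) := by
    refine HasSum.even_add_odd ((hasSum_oddTerm hp).div_const _ |>.congr_fun fun m => ?_)
      ((hasSum_zetaR hp).div_const _ |>.congr_fun fun m => ?_)
    · rw [oddTerm, div_div, ← mul_pow]; push_cast; ring_nf
    · rw [div_div, ← mul_pow]; push_cast; ring_nf
  have h := (hasSum_zetaR hp).unique hsplit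
  field_simp at h
  linarith

theorem hasSum_mixedEulerSum {p q : ℕ} (hp : 2 ≤ p) (hq : 2 ≤ q) :
    HasSum (fun k => oddH p (k + 1) / ((k : ℝ) + 1) ^ q) (mixedEulerSum p q) :=
  ((summable_mul_of_abs_le (hasSum_zetaR hq).summable fun k => by
    rw [abs_of_nonneg (oddH_nonneg p _)]
    exact oddH_le_oddZeta hp (k + 1)).congr fun k => mul_one_div _ _).hasSum

theorem hasSum_mixedEulerSum_one {q : ℕ} (hq : 3 ≤ q) :
    HasSum (fun k => oddH 1 (k + 1) / ((k : ℝ) + 1) ^ q) (mixedEulerSum 1 q) := by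
  obtain ⟨r, rfl⟩ : ∃ r, q = r + 1 := ⟨q - 1, by omega⟩
  refine (((hasSum_zetaR (q := r) (by omega)).summable.mul_left 2).of_nonneg_of_le
    (fun k => div_nonneg (oddH_nonneg 1 _) (by positivity)) fun k => ?_).hasSum
  have h := oddH_one_le (k + 1)
  push_cast at h
  calc oddH 1 (k + 1) / ((k : ℝ) + 1) ^ (r + 1) ≤ 2 * ((k : ℝ) + 1) / ((k : ℝ) + 1) ^ (r + 1) := by
        gcongr
    _ = 2 * (1 / ((k : ℝ) + 1) ^ r) := by rw [pow_succ]; field_simp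

section PartialFractions

variable {K : Type*} [Field K] {x y N : K}

theorem one_div_sq_mul_one_div_add_cube (hx : x ≠ 0) (hN : N ≠ 0) (hxN : x + N ≠ 0) :
    1 / x ^ 2 * (1 / (x + N) ^ 3) = 1 / N ^ 3 * (1 / x ^ 2) - 3 / N ^ 4 * (1 / x - 1 / (x + N))
      + 2 / N ^ 3 * (1 / (x + N) ^ 2) + 1 / N ^ 2 * (1 / (x + N) ^ 3) := by
  field_simp
  ring

theorem one_div_cube_mul_one_div_add_sq (hx : x ≠ 0) (hN : N ≠ 0) (hxN : x + N ≠ 0) :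
    1 / x ^ 3 * (1 / (x + N) ^ 2) = 1 / N ^ 2 * (1 / x ^ 3) - 2 / N ^ 3 * (1 / x ^ 2)
      + 3 / N ^ 4 * (1 / x - 1 / (x + N)) - 1 / N ^ 3 * (1 / (x + N) ^ 2) := by
  field_simp
  ring

theorem one_div_sq_mul_one_div_cube_of_add_eq (hx : x ≠ 0) (hy : y ≠ 0) (hN : N ≠ 0)
    (hxy : x + y = N) :
    1 / x ^ 2 * (1 / y ^ 3) = 1 / N ^ 3 * (1 / x ^ 2) + 3 / N ^ 4 * (1 / x)
      + 1 / N ^ 2 * (1 / y ^ 3) + 2 / N ^ 3 * (1 / y ^ 2) + 3 / N ^ 4 * (1 / y) := by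
  subst hxy
  field_simp
  ring

end PartialFractions

theorem oddZeta_mul_oddZeta_eq {p q : ℕ} (hp : 2 ≤ p) (hq : 2 ≤ q) :
    oddZeta p * oddZeta q = oddEulerSum p q + oddZeta (p + q) + oddEulerSum q p := by
  rw [oddZeta, oddZeta,
    tsum_mul_tsum_eq_tsum_sum_range_mul_add (summable_oddTerm hp) (summable_oddTerm hq)]
  simp only [← oddH_eq_sum_oddTerm, oddTerm_mul_oddTerm, mul_comm (oddTerm p _) (oddH q _)]
  rfl

theorem hasSum_oddTerm_two_mul_oddTerm_three_add_succ (k : ℕ) :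
    HasSum (fun m => oddTerm 2 m * oddTerm 3 (m + k + 1))
      (oddZeta 2 / ((k : ℝ) + 1) ^ 3 - 3 / ((k : ℝ) + 1) ^ 4 * oddH 1 (k + 1)
        + 2 / ((k : ℝ) + 1) ^ 3 * (oddZeta 2 - oddH 2 (k + 1))
        + 1 / ((k : ℝ) + 1) ^ 2 * (oddZeta 3 - oddH 3 (k + 1))) := by
  refine ((((hasSum_oddTerm le_rfl).div_const _).sub
    ((hasSum_oddTerm_one_sub_oddTerm_one_add (k + 1)).mul_left _)).add
    ((hasSum_oddTerm_add le_rfl (k + 1)).mul_left _)).add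
    ((hasSum_oddTerm_add (p := 3) (by norm_num) (k + 1)).mul_left _) |>.congr_fun fun m => ?_
  have := one_div_sq_mul_one_div_add_cube (x := (m : ℝ) + 1 / 2) (N := (k : ℝ) + 1)
    (by positivity) (by positivity) (by positivity)
  simp only [oddTerm]
  push_cast
  linear_combination this

theorem hasSum_oddTerm_three_mul_oddTerm_two_add_succ (k : ℕ) :
    HasSum (fun m => oddTerm 3 m * oddTerm 2 (m + k + 1))
      (oddZeta 3 / ((k : ℝ) + 1) ^ 2 - 2 / ((k : ℝ) + 1) ^ 3 * oddZeta 2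
        + 3 / ((k : ℝ) + 1) ^ 4 * oddH 1 (k + 1)
        - 1 / ((k : ℝ) + 1) ^ 3 * (oddZeta 2 - oddH 2 (k + 1))) := by
  refine ((((hasSum_oddTerm (p := 3) (by norm_num)).div_const _).sub
    ((hasSum_oddTerm le_rfl).mul_left _)).add
    ((hasSum_oddTerm_one_sub_oddTerm_one_add (k + 1)).mul_left _)).sub
    ((hasSum_oddTerm_add le_rfl (k + 1)).mul_left _) |>.congr_fun fun m => ?_
  have := one_div_cube_mul_one_div_add_sq (x := (m : ℝ) + 1 / 2) (N := (k : ℝ) + 1)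
    (by positivity) (by positivity) (by positivity)
  simp only [oddTerm]
  push_cast
  linear_combination this

theorem sum_antidiagonal_oddTerm_two_mul_oddTerm_three (s : ℕ) :
    ∑ ij ∈ antidiagonal s, oddTerm 2 ij.1 * oddTerm 3 ij.2 =
      6 / ((s : ℝ) + 1) ^ 4 * oddH 1 (s + 1) + 3 / ((s : ℝ) + 1) ^ 3 * oddH 2 (s + 1)
        + 1 / ((s : ℝ) + 1) ^ 2 * oddH 3 (s + 1) := by
  set N : ℝ := (s : ℝ) + 1
  have hsplit : ∀ ij ∈ antidiagonal s, oddTerm 2 ij.1 * oddTerm 3 ij.2 =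
      (1 / N ^ 3 * oddTerm 2 ij.1 + 3 / N ^ 4 * oddTerm 1 ij.1) + (1 / N ^ 2 * oddTerm 3 ij.2
        + 2 / N ^ 3 * oddTerm 2 ij.2 + 3 / N ^ 4 * oddTerm 1 ij.2) := by
    rintro ⟨i, j⟩ hij
    have hN : ((i : ℝ) + 1 / 2) + ((j : ℝ) + 1 / 2) = N := by
      rw [HasAntidiagonal.mem_antidiagonal] at hij
      simp only [N, ← hij]
      push_cast
      ring
    have := one_div_sq_mul_one_div_cube_of_add_eq (by positivity) (by positivity)
      (by positivity) hN
    simp only [oddTerm]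
    linear_combination this
  have hfst : ∀ φ : ℕ → ℝ, ∑ ij ∈ antidiagonal s, φ ij.1 = ∑ i ∈ range (s + 1), φ i :=
    fun φ => Nat.sum_antidiagonal_eq_sum_range_succ (fun i _ => φ i) s
  have hsnd : ∀ φ : ℕ → ℝ, ∑ ij ∈ antidiagonal s, φ ij.2 = ∑ i ∈ range (s + 1), φ i :=
    fun φ => (Nat.sum_antidiagonal_swap (f := fun ij => φ ij.1)).trans (hfst φ)
  simp only [sum_congr rfl hsplit, sum_add_distrib, ← mul_sum]
  rw [hfst, hfst, hsnd, hsnd, hsnd]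
  simp only [← oddH_eq_sum_oddTerm]
  ring

theorem oddEulerSum_two_three_eq :
    oddEulerSum 2 3 = 3 * oddZeta 2 * zetaR 3 + oddZeta 3 * zetaR 2
      - (3 * mixedEulerSum 1 4 + 2 * mixedEulerSum 2 3 + mixedEulerSum 3 2) := by
  have hgap : oddEulerSum 2 3 = ∑' k, ∑' m, oddTerm 2 m * oddTerm 3 (m + k + 1) := by
    rw [← tsum_sum_range_eq_tsum_tsum_add_succ (summable_oddTerm_mul_oddTerm le_rfl (by norm_num))]
    exact tsum_congr fun n => sum_mul _ _ _
  rw [hgap, tsum_congr fun k => (hasSum_oddTerm_two_mul_oddTerm_three_add_succ k).tsum_eq]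
  have h14 : HasSum _ (mixedEulerSum 1 4) := hasSum_mixedEulerSum_one (by norm_num)
  have h23 : HasSum _ (mixedEulerSum 2 3) := hasSum_mixedEulerSum le_rfl (by norm_num)
  have h32 : HasSum _ (mixedEulerSum 3 2) := hasSum_mixedEulerSum (by norm_num) le_rfl
  have hζ2 : HasSum _ (zetaR 2) := hasSum_zetaR le_rfl
  have hζ3 : HasSum _ (zetaR 3) := hasSum_zetaR (by norm_num)
  refine HasSum.tsum_eq (HasSum.congr_fun (((hζ3.mul_left (3 * oddZeta 2)).add
    (hζ2.mul_left (oddZeta 3))).sub (((h14.mul_left 3).add (h23.mul_left 2)).add h32)) fun k => ?_)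
  ring

theorem oddEulerSum_three_two_eq :
    oddEulerSum 3 2 = oddZeta 3 * zetaR 2 - 3 * oddZeta 2 * zetaR 3
      + 3 * mixedEulerSum 1 4 + mixedEulerSum 2 3 := by
  have hgap : oddEulerSum 3 2 = ∑' k, ∑' m, oddTerm 3 m * oddTerm 2 (m + k + 1) := by
    rw [← tsum_sum_range_eq_tsum_tsum_add_succ (summable_oddTerm_mul_oddTerm (by norm_num) le_rfl)]
    exact tsum_congr fun n => sum_mul _ _ _
  rw [hgap, tsum_congr fun k => (hasSum_oddTerm_three_mul_oddTerm_two_add_succ k).tsum_eq]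
  have h14 : HasSum _ (mixedEulerSum 1 4) := hasSum_mixedEulerSum_one (by norm_num)
  have h23 : HasSum _ (mixedEulerSum 2 3) := hasSum_mixedEulerSum le_rfl (by norm_num)
  have hζ2 : HasSum _ (zetaR 2) := hasSum_zetaR le_rfl
  have hζ3 : HasSum _ (zetaR 3) := hasSum_zetaR (by norm_num)
  refine HasSum.tsum_eq (HasSum.congr_fun ((((hζ2.mul_left (oddZeta 3)).sub
    (hζ3.mul_left (3 * oddZeta 2))).add (h14.mul_left 3)).add h23) fun k => ?_)
  ring

theorem oddZeta_two_mul_oddZeta_three_eq :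
    oddZeta 2 * oddZeta 3 = 6 * mixedEulerSum 1 4 + 3 * mixedEulerSum 2 3 + mixedEulerSum 3 2 := by
  rw [oddZeta, oddZeta, (summable_oddTerm le_rfl).tsum_mul_tsum_eq_tsum_sum_antidiagonal
    (summable_oddTerm (by norm_num)) (summable_oddTerm_mul_oddTerm le_rfl (by norm_num)),
    tsum_congr sum_antidiagonal_oddTerm_two_mul_oddTerm_three]
  have h14 : HasSum _ (mixedEulerSum 1 4) := hasSum_mixedEulerSum_one (by norm_num)
  have h23 : HasSum _ (mixedEulerSum 2 3) := hasSum_mixedEulerSum le_rfl (by norm_num)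
  have h32 : HasSum _ (mixedEulerSum 3 2) := hasSum_mixedEulerSum (by norm_num) le_rfl
  refine HasSum.tsum_eq (HasSum.congr_fun (((h14.mul_left 6).add (h23.mul_left 3)).add h32)
    fun k => ?_)
  ring

theorem oddEulerSum_two_three :
    oddEulerSum 2 3 = 3 * oddZeta 2 * zetaR 3 - oddZeta 5 / 2 := by
  have hdiag : oddZeta 2 * oddZeta 3 = oddEulerSum 2 3 + oddZeta 5 + oddEulerSum 3 2 :=
    oddZeta_mul_oddZeta_eq le_rfl (by norm_num)
  linarith [oddEulerSum_two_three_eq, oddEulerSum_three_two_eq, oddZeta_two_mul_oddZeta_three_eq]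

/-- ∑_{n=1}^∞ h_{n−1}^{(2)}/(n−1/2)³ = 9ζ(2)ζ(3) − (31/2)ζ(5) -/
theorem linear_T_sum_23 :
    (∑' n : ℕ, oddH 2 n / ((n : ℝ) + 1 / 2) ^ 3) =
      9 * zetaR 2 * zetaR 3 - 31 / 2 * zetaR 5 := by
  have h : (∑' n : ℕ, oddH 2 n / ((n : ℝ) + 1 / 2) ^ 3) = oddEulerSum 2 3 :=
    tsum_congr fun n => (mul_one_div _ _).symm
  rw [h, oddEulerSum_two_three, oddZeta_eq le_rfl, oddZeta_eq (by norm_num)]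
  ring
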